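/- Let (T, Σ, μ) be a probability space, A a finite set, and {W_t}_{t∈T} a measurable family of cq-channels A → S(H). For p ∈ P(A) let a(p) := ess-inf_{t∈T} χ(p, W_t) and T_p := {t ∈ T : χ(p, W_t) ≥ a(p)}. Then sup_{p∈P(A)} max_{q∈P(A)} inf_{t∈T_p} χ(q, W_t) = sup_{q∈P(A)} ess-inf_{t∈T} χ(q, W_t). -/

import Mathlib

open Matrix Kronecker BigOperators
open scoped ComplexOrder
open Classical

noncomputable def matFun {n : Type*} [Fintype n] [DecidableEq n]
    (f : ℝ → ℝ) (m : Matrix n n ℂ) : Matrix n n ℂ :=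
  if h : m.IsHermitian then
    (h.eigenvectorUnitary : Matrix n n ℂ) *
      Matrix.diagonal (fun i => (f (h.eigenvalues i) : ℂ)) *
      star (h.eigenvectorUnitary : Matrix n n ℂ)
  else 0

noncomputable def matLog {n : Type*} [Fintype n] [DecidableEq n] (m : Matrix n n ℂ) :
    Matrix n n ℂ := matFun (Real.logb 2) m

/-- von Neumann entropy (base 2). -/
noncomputable def vnEnt {n : Type*} [Fintype n] [DecidableEq n] (m : Matrix n n ℂ) : ℝ :=
  -((m * matLog m).trace.re)

/-- support domination: supp ρ ≤ supp σ. -/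
def SuppLe {n : Type*} [Fintype n] (ρ σ : Matrix n n ℂ) : Prop :=
  ∀ v : n → ℂ, σ.mulVec v = 0 → ρ.mulVec v = 0

/-- quantum relative entropy (finite branch, base 2). -/
noncomputable def qRel {n : Type*} [Fintype n] [DecidableEq n] (ρ σ : Matrix n n ℂ) : ℝ :=
  ((ρ * matLog ρ).trace - (ρ * matLog σ).trace).re

/-- quantum relative entropy with the value +∞ when supports are not dominated. -/
noncomputable def qRelE {n : Type*} [Fintype n] [DecidableEq n] (ρ σ : Matrix n n ℂ) : EReal :=
  if SuppLe ρ σ then ((qRel ρ σ : ℝ) : EReal) else ⊤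

def IsDensity {n : Type*} [Fintype n] (ρ : Matrix n n ℂ) : Prop :=
  ρ.PosSemidef ∧ ρ.trace = 1

def IsProb {A : Type*} [Fintype A] (p : A → ℝ) : Prop :=
  (∀ a, 0 ≤ p a) ∧ ∑ a, p a = 1

/-- cq-state Σ_a p(a) |a⟩⟨a| ⊗ D_a. -/
noncomputable def cqState {A : Type*} [Fintype A] [DecidableEq A] {d : ℕ}
    (p : A → ℝ) (D : A → Matrix (Fin d) (Fin d) ℂ) :
    Matrix (A × Fin d) (A × Fin d) ℂ :=
  ∑ a, (p a : ℂ) • (Matrix.single a a 1 ⊗ₖ D a)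

/-- the average output state Σ_a p(a) D_a. -/
noncomputable def avgState {A : Type*} [Fintype A] {d : ℕ}
    (p : A → ℝ) (D : A → Matrix (Fin d) (Fin d) ℂ) : Matrix (Fin d) (Fin d) ℂ :=
  ∑ a, (p a : ℂ) • D a

/-- Holevo information χ(p, W) -/
noncomputable def holevo {A : Type*} [Fintype A] {d : ℕ}
    (p : A → ℝ) (W : A → Matrix (Fin d) (Fin d) ℂ) : ℝ :=
  vnEnt (avgState p W) - ∑ a, p a * vnEnt (W a)

/-- trace norm -/
noncomputable def traceNorm {n : Type*} [Fintype n] [DecidableEq n] (m : Matrix n n ℂ) : ℝ :=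
  (matFun Real.sqrt (mᴴ * m)).trace.re

/-- n-fold tensor product of matrices (entrywise formula). -/
noncomputable def bigKron {d n : ℕ} (ρ : Fin n → Matrix (Fin d) (Fin d) ℂ) :
    Matrix (Fin n → Fin d) (Fin n → Fin d) ℂ :=
  Matrix.of fun x y => ∏ i, ρ i (x i) (y i)

open MeasureTheory

/-- the essential infimum as defined in the paper. -/
noncomputable def essInfVal {T : Type*} [MeasurableSpace T] (μ : Measure T) (f : T → ℝ) : ℝ :=
  sSup {c : ℝ | μ {t | f t < c} = 0}

/-!
The set `T_p` has full measure: its complement `{t | χ(p, W_t) < a(p)}` is the countable union of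
the null sets `{t | χ(p, W_t) < a(p) - 1/(n+1)}`. Hence the infimum of `χ(q, W_·)` over `T_p` is a
value below which `χ(q, W_·)` lies only on a null set, so it is at most `a(q)`; this gives `≤`.
Conversely `χ(q, W_·) ≥ a(q)` on `T_q`, so the term `p = q` already reaches `a(q)`.
All suprema and infima involved are of bounded families, since `0 ≤ S(ρ) ≤ (d - 1) / log 2`.
-/

lemma trace_mul_matFun {n : Type*} [Fintype n] [DecidableEq n]
    {ρ : Matrix n n ℂ} (h : ρ.IsHermitian) (f : ℝ → ℝ) :
    (ρ * matFun f ρ).trace = ∑ i, ((h.eigenvalues i * f (h.eigenvalues i) : ℝ) : ℂ) := by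
  set U : Matrix n n ℂ := (h.eigenvectorUnitary : Matrix n n ℂ)
  have hU : star U * U = 1 := Matrix.UnitaryGroup.star_mul_self _
  have hρ : ρ = U * diagonal (RCLike.ofReal ∘ h.eigenvalues) * star U := h.spectral_theorem
  rw [matFun, dif_pos h]
  nth_rewrite 1 [hρ]
  calc (U * diagonal (RCLike.ofReal ∘ h.eigenvalues) * star U *
        (U * diagonal (fun i => (f (h.eigenvalues i) : ℂ)) * star U)).trace
      = (U * (diagonal (RCLike.ofReal ∘ h.eigenvalues) * (star U * U) *
          diagonal (fun i => (f (h.eigenvalues i) : ℂ))) * star U).trace := by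
        simp only [Matrix.mul_assoc]
    _ = (diagonal (RCLike.ofReal ∘ h.eigenvalues) *
          diagonal (fun i => (f (h.eigenvalues i) : ℂ))).trace := by
        rw [Matrix.trace_mul_cycle, hU, Matrix.one_mul, Matrix.mul_one]
    _ = _ := by simp [diagonal_mul_diagonal, trace_diagonal]

lemma vnEnt_eq_sum_negMulLog {n : Type*} [Fintype n] [DecidableEq n]
    {ρ : Matrix n n ℂ} (h : ρ.IsHermitian) :
    vnEnt ρ = (∑ i, Real.negMulLog (h.eigenvalues i)) / Real.log 2 := by
  rw [vnEnt, matLog, trace_mul_matFun h, Complex.re_sum, Finset.sum_div, ← Finset.sum_neg_distrib]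
  refine Finset.sum_congr rfl fun i _ => ?_
  rw [Complex.ofReal_re, Real.negMulLog, ← Real.log_div_log]
  ring

lemma IsDensity.sum_eigenvalues {n : Type*} [Fintype n] [DecidableEq n] {ρ : Matrix n n ℂ}
    (hρ : IsDensity ρ) : ∑ i, hρ.1.isHermitian.eigenvalues i = 1 := by
  have := congrArg Complex.re (hρ.2.symm.trans hρ.1.isHermitian.trace_eq_sum_eigenvalues)
  simpa [Complex.re_sum] using this.symm

lemma IsDensity.eigenvalues_le_one {n : Type*} [Fintype n] [DecidableEq n] {ρ : Matrix n n ℂ}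
    (hρ : IsDensity ρ) (i : n) : hρ.1.isHermitian.eigenvalues i ≤ 1 :=
  hρ.sum_eigenvalues ▸
    Finset.single_le_sum (fun j _ => hρ.1.eigenvalues_nonneg j) (Finset.mem_univ i)

lemma IsDensity.vnEnt_nonneg {n : Type*} [Fintype n] [DecidableEq n] {ρ : Matrix n n ℂ}
    (hρ : IsDensity ρ) : 0 ≤ vnEnt ρ := by
  rw [vnEnt_eq_sum_negMulLog hρ.1.isHermitian]
  exact div_nonneg (Finset.sum_nonneg fun i _ =>
    Real.negMulLog_nonneg (hρ.1.eigenvalues_nonneg i) (hρ.eigenvalues_le_one i))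
    (Real.log_nonneg one_le_two)

lemma IsDensity.vnEnt_le {n : Type*} [Fintype n] [DecidableEq n] {ρ : Matrix n n ℂ}
    (hρ : IsDensity ρ) : vnEnt ρ ≤ (Fintype.card n - 1) / Real.log 2 := by
  rw [vnEnt_eq_sum_negMulLog hρ.1.isHermitian]
  gcongr
  calc ∑ i, Real.negMulLog (hρ.1.isHermitian.eigenvalues i)
      ≤ ∑ i, (1 - hρ.1.isHermitian.eigenvalues i) :=
        Finset.sum_le_sum fun i _ => Real.negMulLog_le_one_sub_self (hρ.1.eigenvalues_nonneg i)
    _ = Fintype.card n - 1 := by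
        rw [Finset.sum_sub_distrib, hρ.sum_eigenvalues]
        simp

lemma isDensity_avgState {A : Type*} [Fintype A] {d : ℕ} {p : A → ℝ} (hp : IsProb p)
    {D : A → Matrix (Fin d) (Fin d) ℂ} (hD : ∀ a, IsDensity (D a)) :
    IsDensity (avgState p D) := by
  refine ⟨Finset.sum_induction _ _ (fun _ _ => PosSemidef.add) PosSemidef.zero fun a _ => ?_, ?_⟩
  · exact (hD a).1.smul (by exact_mod_cast hp.1 a)
  · simp only [avgState, trace_sum, trace_smul, (hD _).2, smul_eq_mul, mul_one]
    exact_mod_cast hp.2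

lemma abs_holevo_le {A : Type*} [Fintype A] {d : ℕ} {p : A → ℝ} (hp : IsProb p)
    {W : A → Matrix (Fin d) (Fin d) ℂ} (hW : ∀ a, IsDensity (W a)) :
    |holevo p W| ≤ (d - 1) / Real.log 2 := by
  have hB := (isDensity_avgState hp hW).vnEnt_le
  have hmix_nonneg : 0 ≤ ∑ a, p a * vnEnt (W a) :=
    Finset.sum_nonneg fun a _ => mul_nonneg (hp.1 a) (hW a).vnEnt_nonneg
  have hmix_le : ∑ a, p a * vnEnt (W a) ≤ (d - 1) / Real.log 2 :=
    calc ∑ a, p a * vnEnt (W a) ≤ ∑ a, p a * ((d - 1) / Real.log 2) :=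
          Finset.sum_le_sum fun a _ => by
            simpa using mul_le_mul_of_nonneg_left (hW a).vnEnt_le (hp.1 a)
      _ = (d - 1) / Real.log 2 := by rw [← Finset.sum_mul, hp.2, one_mul]
  rw [Fintype.card_fin] at hB
  rw [holevo, abs_le]
  constructor <;> linarith [(isDensity_avgState hp hW).vnEnt_nonneg]

section essInf

variable {T : Type*} [MeasurableSpace T] {μ : Measure T} {f : T → ℝ}

lemma bddAbove_null_sublevels [NeZero μ] :
    BddAbove {c : ℝ | μ {t | f t < c} = 0} := by
  obtain ⟨n, hn⟩ : ∃ n : ℕ, μ {t | f t < n} ≠ 0 := by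
    by_contra! h
    have hcover : (Set.univ : Set T) = ⋃ n : ℕ, {t | f t < n} :=
      (Set.iUnion_eq_univ_iff.2 fun t => exists_nat_gt (f t)).symm
    exact NeZero.ne μ (Measure.measure_univ_eq_zero.1 (hcover ▸ measure_iUnion_null h))
  refine ⟨n, fun c hc => le_of_not_gt fun hnc => hn ?_⟩
  exact measure_mono_null (fun t (ht : f t < n) => ht.trans hnc) hc

lemma nonempty_null_sublevels (hf : BddBelow (Set.range f)) :
    {c : ℝ | μ {t | f t < c} = 0}.Nonempty := by
  obtain ⟨L, hL⟩ := hf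
  have hempty : {t | f t < L} = ∅ :=
    Set.eq_empty_of_forall_notMem fun t (ht : f t < L) => (hL ⟨t, rfl⟩).not_gt ht
  exact ⟨L, show μ {t | f t < L} = 0 by rw [hempty, measure_empty]⟩

lemma measure_lt_essInfVal (hf : BddBelow (Set.range f)) :
    μ {t | f t < essInfVal μ f} = 0 := by
  have hcover : {t | f t < essInfVal μ f} ⊆ ⋃ n : ℕ, {t | f t < essInfVal μ f - 1 / (n + 1)} :=
    fun t (ht : f t < _) => Set.mem_iUnion.2 <|
      (exists_nat_one_div_lt (K := ℝ) (sub_pos.2 ht)).imp fun n hn => show f t < _ by linarith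
  refine measure_mono_null hcover (measure_iUnion_null fun n => ?_)
  obtain ⟨c, hc, hlt⟩ := exists_lt_of_lt_csSup (nonempty_null_sublevels hf)
    (sub_lt_self (essInfVal μ f) (Nat.one_div_pos_of_nat (n := n)))
  exact measure_mono_null (fun t (ht : f t < _) => ht.trans hlt) hc

lemma exists_essInfVal_le [NeZero μ] (hf : BddBelow (Set.range f)) :
    ∃ t, essInfVal μ f ≤ f t := by
  by_contra! h
  have huniv : {t | f t < essInfVal μ f} = Set.univ := Set.eq_univ_of_forall h
  exact NeZero.ne μ (Measure.measure_univ_eq_zero.1 (huniv ▸ measure_lt_essInfVal hf))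

lemma csInf_image_le_essInfVal [NeZero μ] {s : Set T} (hs : μ sᶜ = 0)
    (hf : BddBelow (f '' s)) : sInf (f '' s) ≤ essInfVal μ f := by
  refine le_csSup bddAbove_null_sublevels (measure_mono_null (fun t ht => ?_) hs)
  exact fun hts => (csInf_le hf ⟨t, hts, rfl⟩).not_gt ht

lemma essInfVal_le_of_abs_le [NeZero μ] {B : ℝ} (hf : ∀ t, |f t| ≤ B) : essInfVal μ f ≤ B := by
  obtain ⟨t, ht⟩ := exists_essInfVal_le (μ := μ)
    ⟨-B, by rintro _ ⟨t, rfl⟩; exact neg_le_of_abs_le (hf t)⟩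
  exact ht.trans (le_of_abs_le (hf t))

theorem iSup_iSup_csInf_image_eq_iSup_essInfVal [NeZero μ] {ι : Type*} (F : ι → T → ℝ) {B : ℝ}
    (hF : ∀ i t, |F i t| ≤ B) :
    ⨆ p, ⨆ q, sInf (F q '' {t | essInfVal μ (F p) ≤ F p t}) = ⨆ q, essInfVal μ (F q) := by
  rcases isEmpty_or_nonempty ι with hι | hι
  · simp only [iSup_of_empty']
  have hbddBelow (i : ι) : BddBelow (Set.range (F i)) :=
    ⟨-B, by rintro _ ⟨t, rfl⟩; exact neg_le_of_abs_le (hF i t)⟩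
  have hlevel_nonempty (p : ι) : {t | essInfVal μ (F p) ≤ F p t}.Nonempty :=
    exists_essInfVal_le (hbddBelow p)
  have hinf_le (p q : ι) : sInf (F q '' {t | essInfVal μ (F p) ≤ F p t}) ≤ B := by
    obtain ⟨t, ht⟩ := hlevel_nonempty p
    exact csInf_le_of_le ((hbddBelow q).mono (Set.image_subset_range _ _)) ⟨t, ht, rfl⟩
      (le_of_abs_le (hF q t))
  have hsup_le (p : ι) : ⨆ q, sInf (F q '' {t | essInfVal μ (F p) ≤ F p t}) ≤ B :=
    ciSup_le (hinf_le p)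
  apply le_antisymm
  · refine ciSup_le fun p => ciSup_le fun q => ?_
    have hnull : μ {t | essInfVal μ (F p) ≤ F p t}ᶜ = 0 := by
      simpa only [Set.compl_ofPred, not_le] using measure_lt_essInfVal (hbddBelow p)
    exact (csInf_image_le_essInfVal hnull ((hbddBelow q).mono (Set.image_subset_range _ _))).trans
      (le_ciSup ⟨B, by rintro _ ⟨i, rfl⟩; exact essInfVal_le_of_abs_le (μ := μ) (hF i)⟩ q)
  · refine ciSup_le fun q => ?_
    calc essInfVal μ (F q) ≤ sInf (F q '' {t | essInfVal μ (F q) ≤ F q t}) :=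
          le_csInf ((hlevel_nonempty q).image _) (by rintro _ ⟨t, ht, rfl⟩; exact ht)
      _ ≤ ⨆ q', sInf (F q' '' {t | essInfVal μ (F q) ≤ F q t}) :=
          le_ciSup ⟨B, by rintro _ ⟨i, rfl⟩; exact hinf_le q i⟩ q
      _ ≤ _ := le_ciSup ⟨B, by rintro _ ⟨i, rfl⟩; exact hsup_le i⟩ q

end essInf

theorem stmt13_general {T : Type*} [MeasurableSpace T] (μ : Measure T) [IsProbabilityMeasure μ]
    {A : Type*} [Fintype A] {d : ℕ} (W : T → A → Matrix (Fin d) (Fin d) ℂ)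
    (hW : ∀ t a, IsDensity (W t a)) :
    (⨆ p : {p : A → ℝ // IsProb p}, ⨆ q : {p : A → ℝ // IsProb p},
      sInf ((fun t => holevo q.1 (W t)) ''
        {t | essInfVal μ (fun s => holevo p.1 (W s)) ≤ holevo p.1 (W t)}))
    = ⨆ q : {p : A → ℝ // IsProb p}, essInfVal μ (fun t => holevo q.1 (W t)) :=
  iSup_iSup_csInf_image_eq_iSup_essInfVal (μ := μ)
    (fun (p : {p : A → ℝ // IsProb p}) t => holevo p.1 (W t)) fun p t => abs_holevo_le p.2 (hW t)

/-- sup over p and q of inf over T_p equals sup of the essential infimum. -/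
theorem stmt13 {T : Type*} [MeasurableSpace T] (μ : Measure T) [IsProbabilityMeasure μ]
    {A : Type*} [Fintype A] {d : ℕ} (W : T → A → Matrix (Fin d) (Fin d) ℂ)
    (hW : ∀ t a, IsDensity (W t a))
    (hmeas : ∀ p : A → ℝ, IsProb p → Measurable fun t => holevo p (W t)) :
    (⨆ p : {p : A → ℝ // IsProb p}, ⨆ q : {p : A → ℝ // IsProb p},
      sInf ((fun t => holevo q.1 (W t)) ''
        {t | essInfVal μ (fun s => holevo p.1 (W s)) ≤ holevo p.1 (W t)}))
    = ⨆ q : {p : A → ℝ // IsProb p}, essInfVal μ (fun t => holevo q.1 (W t)) :=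
  stmt13_general μ W hW
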